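/- Let X^{(1)}, X^{(2)}, … be i.i.d. copies of a random vector X = (X₁,…,X_d) whose joint distribution function F is a MEV distribution with unit Fréchet marginals, and let I₁, I₂ be disjoint non-empty subsets of {1,…,d}. For x, y > 0 define the sample means M̄₁ = n^{-1} Σ_{i=1}^n max_{j∈I₁} F_j(X_j^{(i)})^{1/x}, M̄₂ = n^{-1} Σ_{i=1}^n max_{j∈I₂} F_j(X_j^{(i)})^{1/y}, M̄₁₂ = n^{-1} Σ_{i=1}^n ( max_{j∈I₁} F_j(X_j^{(i)})^{1/x} ∨ max_{j∈I₂} F_j(X_j^{(i)})^{1/y} ), and the plug-in estimators x ε̃_{I₁} = M̄₁/(1−M̄₁), y ε̃_{I₂} = M̄₂/(1−M̄₂), l̃^{(I₁,I₂)}(x^{-1},y^{-1}) = M̄₁₂/(1−M̄₁₂), and Λ̃_U^{(I₁,I₂)}(x,y) = x ε̃_{I₁} + y ε̃_{I₂} − l̃^{(I₁,I₂)}(x^{-1},y^{-1}). Then, as n → ∞, Λ̃_U^{(I₁,I₂)}(x,y) → Λ_U^{(I₁,I₂)}(x,y) almost surely; in particular the estimator ε̃_{(I₁,I₂)} = Λ̃_U^{(I₁,I₂)}(1,1)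 converges almost surely to ε_{(I₁,I₂)}. -/

import Mathlib

open MeasureTheory Filter Finset

/-- The joint distribution function of the random vector `X` under `μ`. -/
noncomputable def jointCDF {Ω : Type*} [MeasurableSpace Ω] (μ : Measure Ω) {d : ℕ}
    (X : Fin d → Ω → ℝ) (x : Fin d → ℝ) : ℝ :=
  (μ {ω | ∀ i, X i ω ≤ x i}).toReal

/-- The marginal distribution function of the `i`-th coordinate of `X` under `μ`. -/
noncomputable def margCDF {Ω : Type*} [MeasurableSpace Ω] (μ : Measure Ω) {d : ℕ}
    (X : Fin d → Ω → ℝ) (i : Fin d) (u : ℝ) : ℝ :=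
  (μ {ω | X i ω ≤ u}).toReal

/-- `l^{(I₁,I₂)}(x,y) = -log F(a₁,…,a_d)` where `aᵢ = x` on `I₁`, `aᵢ = y` on `I₂` and
`aᵢ = ∞` otherwise (taking the limit of `F` in those arguments, i.e. dropping the
corresponding constraints). -/
noncomputable def mevL {Ω : Type*} [MeasurableSpace Ω] (μ : Measure Ω) {d : ℕ}
    (X : Fin d → Ω → ℝ) (I₁ I₂ : Finset (Fin d)) (x y : ℝ) : ℝ :=
  -Real.log (μ {ω | (∀ i ∈ I₁, X i ω ≤ x) ∧ (∀ j ∈ I₂, X j ω ≤ y)}).toReal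

/-- The extremal coefficient `ε_I = l^{(I,∅)}(1,1)` of the sub-vector `X_I`. -/
noncomputable def extCoef {Ω : Type*} [MeasurableSpace Ω] (μ : Measure Ω) {d : ℕ}
    (X : Fin d → Ω → ℝ) (I : Finset (Fin d)) : ℝ :=
  mevL μ X I ∅ 1 1

/-- `M(I) = max_{i ∈ I} F_i(X_i)`. -/
noncomputable def Msub {Ω : Type*} [MeasurableSpace Ω] (μ : Measure Ω) {d : ℕ}
    (X : Fin d → Ω → ℝ) (I : Finset (Fin d)) (hI : I.Nonempty) (ω : Ω) : ℝ :=
  I.sup' hI fun i => margCDF μ X i (X i ω)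

/-- The stable tail dependence function `l(x₁,…,x_d) = -log F(x₁,…,x_d)`. -/
noncomputable def stdf {Ω : Type*} [MeasurableSpace Ω] (μ : Measure Ω) {d : ℕ}
    (X : Fin d → Ω → ℝ) (x : Fin d → ℝ) : ℝ :=
  -Real.log (jointCDF μ X x)

/-- `X` has a multivariate extreme value (max-stable) distribution with unit Fréchet
marginals under the probability measure `μ`. -/
structure IsMEVFrechet {Ω : Type*} [MeasurableSpace Ω] (μ : Measure Ω) {d : ℕ}
    (X : Fin d → Ω → ℝ) : Prop where
  meas : ∀ i, Measurable (X i)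
  frechet : ∀ i, ∀ u : ℝ, 0 < u → margCDF μ X i u = Real.exp (-u⁻¹)
  maxStable : ∀ t : ℝ, 0 < t → ∀ x : Fin d → ℝ, (∀ i, 0 < x i) →
    jointCDF μ X (fun i => t * x i) ^ t = jointCDF μ X x

/-- Sample mean `n⁻¹ Σ_{i<n} M(I)^{1/x}` of the `i.i.d.` copies, where
`M(I) = max_{j∈I} F_j(X_j)` and `F_j` is the common marginal distribution function. -/
noncomputable def MbarI {Ω : Type*} [MeasurableSpace Ω] (μ : Measure Ω) {d : ℕ}
    (Xs : ℕ → Ω → Fin d → ℝ) (I : Finset (Fin d)) (hI : I.Nonempty) (x : ℝ)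
    (n : ℕ) (ω : Ω) : ℝ :=
  (n : ℝ)⁻¹ * ∑ i ∈ Finset.range n,
    I.sup' hI fun j => margCDF μ (fun k ω' => Xs 0 ω' k) j (Xs i ω j) ^ x⁻¹

/-- Sample mean `n⁻¹ Σ_{i<n} (M(I₁)^{1/x} ∨ M(I₂)^{1/y})`. -/
noncomputable def MbarII {Ω : Type*} [MeasurableSpace Ω] (μ : Measure Ω) {d : ℕ}
    (Xs : ℕ → Ω → Fin d → ℝ) (I₁ I₂ : Finset (Fin d)) (h1 : I₁.Nonempty) (h2 : I₂.Nonempty)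
    (x y : ℝ) (n : ℕ) (ω : Ω) : ℝ :=
  (n : ℝ)⁻¹ * ∑ i ∈ Finset.range n,
    max (I₁.sup' h1 fun j => margCDF μ (fun k ω' => Xs 0 ω' k) j (Xs i ω j) ^ x⁻¹)
      (I₂.sup' h2 fun j => margCDF μ (fun k ω' => Xs 0 ω' k) j (Xs i ω j) ^ y⁻¹)

/-- The plug-in estimator `Λ̃_U^{(I₁,I₂)}(x,y) = xε̃_{I₁} + yε̃_{I₂} - l̃^{(I₁,I₂)}(x⁻¹,y⁻¹)`
built from the sample means via `m ↦ m/(1-m)`. -/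
noncomputable def lambdaUTilde {Ω : Type*} [MeasurableSpace Ω] (μ : Measure Ω) {d : ℕ}
    (Xs : ℕ → Ω → Fin d → ℝ) (I₁ I₂ : Finset (Fin d)) (h1 : I₁.Nonempty) (h2 : I₂.Nonempty)
    (x y : ℝ) (n : ℕ) (ω : Ω) : ℝ :=
  MbarI μ Xs I₁ h1 x n ω / (1 - MbarI μ Xs I₁ h1 x n ω)
    + MbarI μ Xs I₂ h2 y n ω / (1 - MbarI μ Xs I₂ h2 y n ω)
    - MbarII μ Xs I₁ I₂ h1 h2 x y n ω / (1 - MbarII μ Xs I₁ I₂ h1 h2 x y n ω)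

/-!
Max-stability descends to the distribution function `F_I(w) = P(X_j ≤ w_j, j ∈ I)` of every
sub-vector, so `F_I(t w) = F_I(w)^{1/t}`. As
`F_j(X_j)^{w_j} ≤ u` iff `X_j ≤ w_j / (-log u)`, the variable `M = max_{j ∈ I} F_j(X_j)^{w_j}`
has distribution function `u ↦ u^θ` on `(0,1)` with `θ = -log F_I(w)`, hence mean `θ / (θ + 1)`.
By the strong law the sample means of `M` converge almost surely to `θ / (θ + 1)`, and
`m ↦ m / (1 - m)` recovers `θ`. For `I₁`, `I₂` and `I₁ ∪ I₂` with weights `1/x` and `1/y`, `θ` is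
`x ε_{I₁}`, `y ε_{I₂}` and `l^{(I₁,I₂)}(1/x, 1/y)`.
-/

open ProbabilityTheory
open scoped Topology

section LayerCake

variable {Ω : Type*} [MeasurableSpace Ω] {μ : Measure Ω} [IsProbabilityMeasure μ]

theorem integral_eq_div_of_measureReal_le_eq_rpow {Y : Ω → ℝ} (hY : Measurable Y)
    (hY01 : ∀ ω, Y ω ∈ Set.Icc 0 1) {θ : ℝ} (hθ : 0 ≤ θ)
    (hcdf : ∀ u, 0 < u → u < 1 → μ.real {ω | Y ω ≤ u} = u ^ θ) :
    ∫ ω, Y ω ∂μ = θ / (θ + 1) := by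
  have hint : Integrable Y μ :=
    Integrable.of_mem_Icc 0 1 hY.aemeasurable (Eventually.of_forall hY01)
  have htail : Set.EqOn (fun u => μ.real {ω | u < Y ω})
      ((Set.Ioo 0 1).indicator fun u => 1 - u ^ θ) (Set.Ioi 0) := by
    intro u (hu : 0 < u)
    dsimp only
    rcases lt_or_ge u 1 with hu₁ | hu₁
    · rw [Set.indicator_of_mem (Set.mem_Ioo.2 ⟨hu, hu₁⟩), ← hcdf u hu hu₁,
        ← probReal_compl_eq_one_sub (measurableSet_le hY measurable_const)]
      simp only [Set.compl_ofPred, not_le]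
    · have hempty : {ω | u < Y ω} = ∅ :=
        Set.eq_empty_of_forall_notMem fun ω hω => (hY01 ω).2.not_gt (hu₁.trans_lt hω)
      rw [Set.indicator_of_notMem fun h => h.2.not_ge hu₁, hempty, measureReal_empty]
  rw [hint.integral_eq_integral_meas_lt (Eventually.of_forall fun ω => (hY01 ω).1),
    setIntegral_congr_fun measurableSet_Ioi htail, integral_indicator measurableSet_Ioo,
    Measure.restrict_restrict measurableSet_Ioo,
    Set.inter_eq_left.2 Set.Ioo_subset_Ioi_self, ← integral_Ioc_eq_integral_Ioo,
    ← intervalIntegral.integral_of_le zero_le_one,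
    intervalIntegral.integral_sub intervalIntegrable_const
      (intervalIntegral.intervalIntegrable_rpow' (by linarith)),
    integral_rpow (Or.inl (by linarith)), intervalIntegral.integral_const,
    Real.one_rpow, Real.zero_rpow (by positivity)]
  field_simp
  ring

end LayerCake

section SampleMean

variable {Ω E : Type*} [MeasurableSpace Ω] [MeasurableSpace E] {μ : Measure Ω}

noncomputable def sampleMean (Xs : ℕ → Ω → E) (g : E → ℝ) (n : ℕ) (ω : Ω) : ℝ :=
  (n : ℝ)⁻¹ * ∑ i ∈ range n, g (Xs i ω)

theorem ae_tendsto_sampleMean {Xs : ℕ → Ω → E} (hmeas : ∀ n, Measurable (Xs n))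
    (hindep : iIndepFun Xs μ) (hident : ∀ n, μ.map (Xs n) = μ.map (Xs 0)) {g : E → ℝ}
    (hg : Measurable g) (hint : Integrable (fun ω => g (Xs 0 ω)) μ) :
    ∀ᵐ ω ∂μ, Tendsto (fun n => sampleMean Xs g n ω) atTop (𝓝 (∫ ω, g (Xs 0 ω) ∂μ)) := by
  have hlaw := strong_law_ae_real (fun i ω => g (Xs i ω)) hint
    (fun i j hij => (hindep.indepFun hij).comp hg hg)
    fun i => IdentDistrib.comp ⟨(hmeas i).aemeasurable, (hmeas 0).aemeasurable, hident i⟩ hg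
  filter_upwards [hlaw] with ω hω
  simpa only [sampleMean, div_eq_inv_mul] using hω

end SampleMean

theorem Filter.Tendsto.div_one_sub_of_tendsto_div_add_one {α : Type*} {l : Filter α}
    {m : α → ℝ} {θ : ℝ} (hθ : θ + 1 ≠ 0) (h : Tendsto m l (𝓝 (θ / (θ + 1)))) :
    Tendsto (fun a => m a / (1 - m a)) l (𝓝 θ) := by
  have hcompl : 1 - θ / (θ + 1) = (θ + 1)⁻¹ := by field_simp; ring
  have hlim := h.div (tendsto_const_nhds.sub h) (by rw [hcompl]; exact inv_ne_zero hθ)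
  rwa [hcompl, div_inv_eq_mul, div_mul_cancel₀ _ hθ] at hlim

section MaxStable

variable {Ω : Type*} [MeasurableSpace Ω] {μ : Measure Ω} {d : ℕ} {X : Fin d → Ω → ℝ}

noncomputable def subCDF (μ : Measure Ω) (X : Fin d → Ω → ℝ) (I : Finset (Fin d))
    (w : Fin d → ℝ) : ℝ :=
  μ.real {ω | ∀ j ∈ I, X j ω ≤ w j}

theorem subCDF_nonneg (I : Finset (Fin d)) (w : Fin d → ℝ) : 0 ≤ subCDF μ X I w :=
  measureReal_nonneg

theorem neg_log_subCDF_nonneg [IsZeroOrProbabilityMeasure μ] (I : Finset (Fin d))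
    (w : Fin d → ℝ) : 0 ≤ -Real.log (subCDF μ X I w) :=
  neg_nonneg.2 (Real.log_nonpos (subCDF_nonneg I w) measureReal_le_one)

theorem extCoef_eq_neg_log_subCDF (I : Finset (Fin d)) :
    extCoef μ X I = -Real.log (subCDF μ X I fun _ => 1) := by
  simp [extCoef, mevL, subCDF, measureReal_def]

theorem mevL_eq_neg_log_subCDF_union {I₁ I₂ : Finset (Fin d)} (hdisj : Disjoint I₁ I₂)
    (x y : ℝ) :
    mevL μ X I₁ I₂ x y
      = -Real.log (subCDF μ X (I₁ ∪ I₂) fun j => if j ∈ I₁ then x else y) := by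
  have hset : {ω | (∀ i ∈ I₁, X i ω ≤ x) ∧ ∀ j ∈ I₂, X j ω ≤ y}
      = {ω | ∀ j ∈ I₁ ∪ I₂, X j ω ≤ if j ∈ I₁ then x else y} := by
    ext ω
    simp only [Set.mem_ofPred_eq, mem_union, or_imp, forall_and]
    refine and_congr (forall₂_congr fun i hi => by rw [if_pos hi])
      (forall₂_congr fun j hj => by rw [if_neg (disjoint_right.1 hdisj hj)])
  rw [mevL, hset, subCDF, measureReal_def]

theorem margCDF_mono [IsFiniteMeasure μ] (j : Fin d) : Monotone (margCDF μ X j) :=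
  fun _ _ huv => measureReal_mono fun _ hω => le_trans hω huv

theorem tendsto_jointCDF_ite_atTop [IsFiniteMeasure μ] (I : Finset (Fin d)) (a : Fin d → ℝ) :
    Tendsto (fun s : ℝ => jointCDF μ X fun i => if i ∈ I then a i else s) atTop
      (𝓝 (subCDF μ X I a)) := by
  have hmono : Monotone fun s : ℝ => {ω | ∀ i, X i ω ≤ if i ∈ I then a i else s} := by
    intro s t hst ω hω i
    have := hω i
    split_ifs at this ⊢
    exacts [this, this.trans hst]
  have hunion : ⋃ s : ℝ, {ω | ∀ i, X i ω ≤ if i ∈ I then a i else s}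
      = {ω | ∀ j ∈ I, X j ω ≤ a j} := by
    ext ω
    simp only [Set.mem_iUnion, Set.mem_ofPred_eq]
    constructor
    · rintro ⟨s, hs⟩ j hj
      simpa [hj] using hs j
    · intro h
      obtain ⟨s, hs⟩ := Finite.exists_le fun i => X i ω
      refine ⟨s, fun i => ?_⟩
      split_ifs with hi
      exacts [h i hi, hs i]
  have hlim := tendsto_measure_iUnion_atTop (μ := μ) hmono
  rw [hunion] at hlim
  exact (ENNReal.tendsto_toReal (measure_ne_top μ _)).comp hlim

theorem tendsto_subCDF_mul_atTop [IsProbabilityMeasure μ] {I : Finset (Fin d)} {a : Fin d → ℝ}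
    (ha : ∀ j ∈ I, 0 < a j) :
    Tendsto (fun t : ℝ => subCDF μ X I fun j => t * a j) atTop (𝓝 1) := by
  have hmono : Monotone fun t : ℝ => {ω | ∀ j ∈ I, X j ω ≤ t * a j} :=
    fun s t hst ω hω j hj => (hω j hj).trans (mul_le_mul_of_nonneg_right hst (ha j hj).le)
  have hunion : ⋃ t : ℝ, {ω | ∀ j ∈ I, X j ω ≤ t * a j} = Set.univ := by
    refine Set.eq_univ_of_forall fun ω => Set.mem_iUnion.2 ?_
    obtain ⟨t, ht⟩ := Finite.exists_le fun j => X j ω / a j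
    exact ⟨t, fun j hj => (div_le_iff₀ (ha j hj)).1 (ht j)⟩
  have hlim := tendsto_measure_iUnion_atTop (μ := μ) hmono
  rw [hunion, measure_univ] at hlim
  have h := (ENNReal.tendsto_toReal ENNReal.one_ne_top).comp hlim
  rwa [ENNReal.toReal_one] at h

namespace IsMEVFrechet

/-- Max-stability descends to sub-vectors: send the thresholds outside `I` to infinity. -/
theorem subCDF_mul_rpow [IsFiniteMeasure μ] (hmev : IsMEVFrechet μ X) {I : Finset (Fin d)}
    {a : Fin d → ℝ} (ha : ∀ j ∈ I, 0 < a j) {t : ℝ} (ht : 0 < t) :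
    (subCDF μ X I fun j => t * a j) ^ t = subCDF μ X I a := by
  have hstable : ∀ᶠ s : ℝ in atTop,
      (jointCDF μ X fun i => if i ∈ I then t * a i else t * s) ^ t
        = jointCDF μ X fun i => if i ∈ I then a i else s := by
    filter_upwards [eventually_gt_atTop 0] with s hs
    rw [← hmev.maxStable t ht (fun i => if i ∈ I then a i else s)
      fun i => by split_ifs with hi; exacts [ha i hi, hs]]
    congr 2
    funext i
    split_ifs <;> rfl
  have hlim := ((tendsto_jointCDF_ite_atTop (μ := μ) (X := X) I fun j => t * a j).comp
    (tendsto_id.const_mul_atTop ht)).rpow_const (Or.inr ht.le)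
  exact tendsto_nhds_unique (hlim.congr' hstable) (tendsto_jointCDF_ite_atTop I a)

theorem subCDF_pos [IsProbabilityMeasure μ] (hmev : IsMEVFrechet μ X) {I : Finset (Fin d)}
    {a : Fin d → ℝ} (ha : ∀ j ∈ I, 0 < a j) : 0 < subCDF μ X I a := by
  refine (subCDF_nonneg I a).lt_of_ne' fun h0 => zero_ne_one (α := ℝ) ?_
  have hzero : ∀ᶠ t : ℝ in atTop, (subCDF μ X I fun j => t * a j) = 0 := by
    filter_upwards [eventually_gt_atTop 0] with t ht
    have := hmev.subCDF_mul_rpow ha ht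
    rwa [h0, Real.rpow_eq_zero (subCDF_nonneg I _) ht.ne'] at this
  exact tendsto_nhds_unique (tendsto_const_nhds.congr' (hzero.mono fun _ h => h.symm))
    (tendsto_subCDF_mul_atTop ha)

theorem log_subCDF_mul [IsProbabilityMeasure μ] (hmev : IsMEVFrechet μ X) {I : Finset (Fin d)}
    {a : Fin d → ℝ} (ha : ∀ j ∈ I, 0 < a j) {t : ℝ} (ht : 0 < t) :
    Real.log (subCDF μ X I fun j => t * a j) = t⁻¹ * Real.log (subCDF μ X I a) := by
  have hpos := hmev.subCDF_pos fun j hj => mul_pos ht (ha j hj)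
  rw [← hmev.subCDF_mul_rpow ha ht, Real.log_rpow hpos, inv_mul_cancel_left₀ ht.ne']

theorem neg_log_subCDF_const_inv [IsProbabilityMeasure μ] (hmev : IsMEVFrechet μ X)
    (I : Finset (Fin d)) {z : ℝ} (hz : 0 < z) :
    -Real.log (subCDF μ X I fun _ => z⁻¹) = z * extCoef μ X I := by
  have h := hmev.log_subCDF_mul (I := I) (a := fun _ => 1) (fun _ _ => one_pos) (inv_pos.2 hz)
  simp only [mul_one, inv_inv] at h
  rw [h, extCoef_eq_neg_log_subCDF, mul_neg]

theorem margCDF_of_nonpos [IsFiniteMeasure μ] (hmev : IsMEVFrechet μ X) (j : Fin d) {v : ℝ}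
    (hv : v ≤ 0) : margCDF μ X j v = 0 := by
  have hle : ∀ u > 0, margCDF μ X j v ≤ Real.exp (-u⁻¹) := fun u hu =>
    hmev.frechet j u hu ▸ margCDF_mono j (hv.trans hu.le)
  have hlim : Tendsto (fun u : ℝ => Real.exp (-u⁻¹)) (𝓝[>] 0) (𝓝 0) :=
    Real.tendsto_exp_atBot.comp (tendsto_neg_atTop_atBot.comp tendsto_inv_nhdsGT_zero)
  exact le_antisymm (ge_of_tendsto hlim (eventually_mem_nhdsWithin.mono hle)) measureReal_nonneg

theorem margCDF_rpow_le_iff [IsFiniteMeasure μ] (hmev : IsMEVFrechet μ X) (j : Fin d)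
    {w u v : ℝ} (hw : 0 < w) (hu₀ : 0 < u) (hu₁ : u < 1) :
    margCDF μ X j v ^ w ≤ u ↔ v ≤ (-Real.log u)⁻¹ * w := by
  have hlog : 0 < -Real.log u := neg_pos.2 (Real.log_neg hu₀ hu₁)
  rcases le_or_gt v 0 with hv | hv
  · rw [hmev.margCDF_of_nonpos j hv, Real.zero_rpow hw.ne']
    exact iff_of_true hu₀.le (hv.trans (by positivity))
  · rw [hmev.frechet j v hv, ← Real.exp_mul, ← Real.le_log_iff_exp_le hu₀, ← div_eq_inv_mul,
      le_div_iff₀ hlog, neg_mul, ← div_eq_inv_mul, neg_le, le_div_iff₀ hv, mul_comm]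

end IsMEVFrechet

noncomputable def maxMargPow (μ : Measure Ω) (X : Fin d → Ω → ℝ) (I : Finset (Fin d))
    (hI : I.Nonempty) (w v : Fin d → ℝ) : ℝ :=
  I.sup' hI fun j => margCDF μ X j (v j) ^ w j

theorem measurable_maxMargPow [IsFiniteMeasure μ] {I : Finset (Fin d)} (hI : I.Nonempty)
    (w : Fin d → ℝ) : Measurable (maxMargPow μ X I hI w) := by
  have h := Finset.measurable_sup' hI fun j _ =>
    ((margCDF_mono (μ := μ) (X := X) j).measurable.comp (measurable_pi_apply j)).pow_const (w j)
  convert h using 1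
  funext v
  rw [Finset.sup'_apply]
  rfl

theorem maxMargPow_mem_Icc [IsZeroOrProbabilityMeasure μ] {I : Finset (Fin d)}
    (hI : I.Nonempty) {w : Fin d → ℝ} (hw : ∀ j ∈ I, 0 ≤ w j) (v : Fin d → ℝ) :
    maxMargPow μ X I hI w v ∈ Set.Icc 0 1 := by
  obtain ⟨j, hj⟩ := hI
  exact ⟨(Real.rpow_nonneg measureReal_nonneg _).trans
      (le_sup' (fun j => margCDF μ X j (v j) ^ w j) hj),
    sup'_le _ _ fun j hj => Real.rpow_le_one measureReal_nonneg measureReal_le_one (hw j hj)⟩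

namespace IsMEVFrechet

theorem measureReal_maxMargPow_le [IsProbabilityMeasure μ] (hmev : IsMEVFrechet μ X)
    {I : Finset (Fin d)} (hI : I.Nonempty) {w : Fin d → ℝ} (hw : ∀ j ∈ I, 0 < w j) {u : ℝ}
    (hu₀ : 0 < u) (hu₁ : u < 1) :
    μ.real {ω | maxMargPow μ X I hI w (fun j => X j ω) ≤ u}
      = u ^ (-Real.log (subCDF μ X I w)) := by
  set t := (-Real.log u)⁻¹
  have ht : 0 < t := inv_pos.2 (neg_pos.2 (Real.log_neg hu₀ hu₁))
  have hset : {ω | maxMargPow μ X I hI w (fun j => X j ω) ≤ u}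
      = {ω | ∀ j ∈ I, X j ω ≤ t * w j} := by
    ext ω
    simp only [Set.mem_ofPred_eq, maxMargPow, sup'_le_iff]
    exact forall₂_congr fun j hj => hmev.margCDF_rpow_le_iff j (hw j hj) hu₀ hu₁
  rw [hset, Real.rpow_def_of_pos hu₀]
  change subCDF μ X I (fun j => t * w j) = _
  rw [← Real.exp_log (hmev.subCDF_pos fun j hj => mul_pos ht (hw j hj)),
    hmev.log_subCDF_mul hw ht, inv_inv]
  ring_nf

theorem integral_maxMargPow [IsProbabilityMeasure μ] (hmev : IsMEVFrechet μ X)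
    {I : Finset (Fin d)} (hI : I.Nonempty) {w : Fin d → ℝ} (hw : ∀ j ∈ I, 0 < w j) :
    ∫ ω, maxMargPow μ X I hI w (fun j => X j ω) ∂μ
      = -Real.log (subCDF μ X I w) / (-Real.log (subCDF μ X I w) + 1) :=
  integral_eq_div_of_measureReal_le_eq_rpow
    ((measurable_maxMargPow hI w).comp (measurable_pi_lambda _ hmev.meas))
    (fun _ => maxMargPow_mem_Icc hI (fun j hj => (hw j hj).le) _)
    (neg_log_subCDF_nonneg I w) fun _ hu₀ hu₁ => hmev.measureReal_maxMargPow_le hI hw hu₀ hu₁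

end IsMEVFrechet

end MaxStable

section Estimator

variable {Ω : Type*} [MeasurableSpace Ω] {μ : Measure Ω} {d : ℕ} {Xs : ℕ → Ω → Fin d → ℝ}

theorem IsMEVFrechet.ae_tendsto_sampleMean_div_one_sub [IsProbabilityMeasure μ]
    (hmeas : ∀ n, Measurable (Xs n))
    (hindep : iIndepFun Xs μ) (hident : ∀ n, μ.map (Xs n) = μ.map (Xs 0))
    (hmev : IsMEVFrechet μ fun i ω => Xs 0 ω i) {I : Finset (Fin d)} (hI : I.Nonempty)
    {w : Fin d → ℝ} (hw : ∀ j ∈ I, 0 < w j) :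
    ∀ᵐ ω ∂μ, Tendsto
      (fun n => sampleMean Xs (maxMargPow μ (fun i ω => Xs 0 ω i) I hI w) n ω
        / (1 - sampleMean Xs (maxMargPow μ (fun i ω => Xs 0 ω i) I hI w) n ω))
      atTop (𝓝 (-Real.log (subCDF μ (fun i ω => Xs 0 ω i) I w))) := by
  have hg := measurable_maxMargPow (μ := μ) (X := fun i ω => Xs 0 ω i) hI w
  have hint := Integrable.of_mem_Icc (μ := μ) 0 1 (hg.comp (hmeas 0)).aemeasurable
    (Eventually.of_forall fun ω => maxMargPow_mem_Icc hI (fun j hj => (hw j hj).le) (Xs 0 ω))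
  filter_upwards [ae_tendsto_sampleMean hmeas hindep hident hg hint] with ω hω
  rw [hmev.integral_maxMargPow hI hw] at hω
  exact hω.div_one_sub_of_tendsto_div_add_one
    (by linarith [neg_log_subCDF_nonneg (μ := μ) (X := fun i ω => Xs 0 ω i) I w])

theorem MbarII_eq_sampleMean {I₁ I₂ : Finset (Fin d)} (h1 : I₁.Nonempty) (h2 : I₂.Nonempty)
    (hdisj : Disjoint I₁ I₂) (x y : ℝ) :
    MbarII μ Xs I₁ I₂ h1 h2 x y = sampleMean Xs
      (maxMargPow μ (fun i ω => Xs 0 ω i) (I₁ ∪ I₂) (h1.mono subset_union_left)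
        fun j => if j ∈ I₁ then x⁻¹ else y⁻¹) := by
  classical
  funext n ω
  refine congrArg _ (sum_congr rfl fun i _ => ?_)
  rw [maxMargPow, sup'_union h1 h2]
  congr 1
  · exact sup'_congr h1 rfl fun j hj => by rw [if_pos hj]
  · exact sup'_congr h2 rfl fun j hj => by rw [if_neg (disjoint_right.1 hdisj hj)]

theorem IsMEVFrechet.ae_tendsto_lambdaUTilde [IsProbabilityMeasure μ]
    (hmeas : ∀ n, Measurable (Xs n))
    (hindep : iIndepFun Xs μ) (hident : ∀ n, μ.map (Xs n) = μ.map (Xs 0))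
    (hmev : IsMEVFrechet μ fun i ω => Xs 0 ω i) {I₁ I₂ : Finset (Fin d)} (h1 : I₁.Nonempty)
    (h2 : I₂.Nonempty) (hdisj : Disjoint I₁ I₂) {x y : ℝ} (hx : 0 < x) (hy : 0 < y) :
    ∀ᵐ ω ∂μ, Tendsto (fun n => lambdaUTilde μ Xs I₁ I₂ h1 h2 x y n ω) atTop
      (𝓝 (x * extCoef μ (fun i ω' => Xs 0 ω' i) I₁ + y * extCoef μ (fun i ω' => Xs 0 ω' i) I₂
        - mevL μ (fun i ω' => Xs 0 ω' i) I₁ I₂ x⁻¹ y⁻¹)) := by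
  have hw : ∀ j ∈ I₁ ∪ I₂, 0 < if j ∈ I₁ then x⁻¹ else y⁻¹ := fun j _ => by
    split_ifs <;> positivity
  filter_upwards [hmev.ae_tendsto_sampleMean_div_one_sub hmeas hindep hident h1
      (w := fun _ => x⁻¹) fun _ _ => inv_pos.2 hx,
    hmev.ae_tendsto_sampleMean_div_one_sub hmeas hindep hident h2
      (w := fun _ => y⁻¹) fun _ _ => inv_pos.2 hy,
    hmev.ae_tendsto_sampleMean_div_one_sub hmeas hindep hident _ hw] with ω h₁ h₂ h₁₂
  rw [← hmev.neg_log_subCDF_const_inv I₁ hx, ← hmev.neg_log_subCDF_const_inv I₂ hy,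
    mevL_eq_neg_log_subCDF_union hdisj]
  simp only [lambdaUTilde, MbarII_eq_sampleMean h1 h2 hdisj]
  exact (h₁.add h₂).sub h₁₂

end Estimator

/-- Strong consistency of the plug-in estimator:
`Λ̃_U^{(I₁,I₂)}(x,y) → Λ_U^{(I₁,I₂)}(x,y)` almost surely, and in particular
`ε̃_{(I₁,I₂)} = Λ̃_U^{(I₁,I₂)}(1,1) → ε_{(I₁,I₂)} = ε_{I₁} + ε_{I₂} - ε_{I₁∪I₂}` a.s. -/
theorem statement18 {Ω : Type*} [MeasurableSpace Ω] (μ : Measure Ω) [IsProbabilityMeasure μ]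
    {d : ℕ} (Xs : ℕ → Ω → Fin d → ℝ)
    (hmeas : ∀ n, Measurable (Xs n))
    (hindep : ProbabilityTheory.iIndepFun Xs μ)
    (hident : ∀ n, Measure.map (Xs n) μ = Measure.map (Xs 0) μ)
    (hmev : IsMEVFrechet μ (fun i ω => Xs 0 ω i))
    (I₁ I₂ : Finset (Fin d)) (h1 : I₁.Nonempty) (h2 : I₂.Nonempty) (hdisj : Disjoint I₁ I₂)
    (x y : ℝ) (hx : 0 < x) (hy : 0 < y) :
    (∀ᵐ ω ∂μ, Tendsto (fun n => lambdaUTilde μ Xs I₁ I₂ h1 h2 x y n ω) atTop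
      (nhds (x * extCoef μ (fun i ω' => Xs 0 ω' i) I₁
        + y * extCoef μ (fun i ω' => Xs 0 ω' i) I₂
        - mevL μ (fun i ω' => Xs 0 ω' i) I₁ I₂ x⁻¹ y⁻¹))) ∧
    (∀ᵐ ω ∂μ, Tendsto (fun n => lambdaUTilde μ Xs I₁ I₂ h1 h2 1 1 n ω) atTop
      (nhds (extCoef μ (fun i ω' => Xs 0 ω' i) I₁
        + extCoef μ (fun i ω' => Xs 0 ω' i) I₂
        - extCoef μ (fun i ω' => Xs 0 ω' i) (I₁ ∪ I₂)))) := by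
  refine ⟨hmev.ae_tendsto_lambdaUTilde hmeas hindep hident h1 h2 hdisj hx hy, ?_⟩
  simpa only [one_mul, inv_one, mevL_eq_neg_log_subCDF_union hdisj, ite_self,
    extCoef_eq_neg_log_subCDF] using
    hmev.ae_tendsto_lambdaUTilde hmeas hindep hident h1 h2 hdisj one_pos one_pos
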